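/- arXiv:1608.02779 — 2 statements merged into one kernel-verified Lean document; each statement's English description precedes it below -/
import Mathlib

section
/- The factorization property q^{φ(β,γ)} (g_β(μ) g_γ(λ)/g_{β+γ}(μ)) · S^{0,α}_{δ,β}(λ,μ) = S^{γ,α}_{δ,β+γ}(λ,μ) holds for all α,β,γ,δ ∈ Z_{≥0}^n with δ+α = 0+β (i.e. in the nonzero case). -/
open scoped BigOperators

noncomputable section

/-- The q-Pochhammer symbol `(z;q)_m = ∏_{j=0}^{m-1} (1 - z q^j)`. -/
def qP (q z : ℝ) (m : ℕ) : ℝ := ∏ j ∈ Finset.range m, (1 - z * q ^ j)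

/-- The q-binomial coefficient, zero outside `0 ≤ k ≤ m`. -/
def qBinom (q : ℝ) (m k : ℕ) : ℝ :=
  if k ≤ m then qP q q m / (qP q q k * qP q q (m - k)) else 0

/-- `|α| = α_1 + ⋯ + α_n`. -/
def wt {n : ℕ} (α : Fin n → ℕ) : ℕ := ∑ i, α i

/-- `φ(α,β) = ∑_{i<j} α_i β_j` for integer arrays. -/
def phiZ {n : ℕ} (α β : Fin n → ℤ) : ℤ :=
  ∑ i, ∑ j, if i < j then α i * β j else 0

/-- coercion of a nonnegative-integer array to an integer array -/
def zc {n : ℕ} (α : Fin n → ℕ) : Fin n → ℤ := fun i => (α i : ℤ)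

/-- The weight function `Φ_q(γ|β; λ,μ)`. -/
def Phi {n : ℕ} (q lam mu : ℝ) (γ β : Fin n → ℕ) : ℝ :=
  q ^ (phiZ (zc β - zc γ) (zc γ)) * (mu / lam) ^ wt γ *
    (qP q lam (wt γ) * qP q (mu / lam) (wt β - wt γ) / qP q mu (wt β)) *
    ∏ i, qBinom q (β i) (γ i)

/-- `g_α(μ) = μ^{-|α|} (μ;q)_{|α|} / ∏_i (q;q)_{α_i}`. -/
def gfun {n : ℕ} (q mu : ℝ) (α : Fin n → ℕ) : ℝ :=
  mu ^ (-(wt α : ℤ)) * qP q mu (wt α) / ∏ i, qP q q (α i)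

/-- The stochastic R matrix element `S(λ,μ)^{γ,δ}_{α,β}`. -/
def Smat {n : ℕ} (q lam mu : ℝ) (γ δ α β : Fin n → ℕ) : ℝ :=
  if γ + δ = α + β then Phi q lam mu γ β else 0

/-! Both sides are products of the same q-Pochhammer symbols: `Φ(0|β)` is
`(μ/λ;q)_{|β|}/(μ;q)_{|β|}`, while `Φ(γ|β+γ)` carries the q-binomials
`(q;q)_{β_i+γ_i}/((q;q)_{β_i}(q;q)_{γ_i})`, which are exactly what the ratio
`g_β(μ) g_γ(λ)/g_{β+γ}(μ)` supplies, together with `(μ/λ)^{|γ|}(λ;q)_{|γ|}` and the change of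
denominator from `(μ;q)_{|β|}` to `(μ;q)_{|β+γ|}`. -/

@[simp]
lemma qP_zero (q z : ℝ) : qP q z 0 = 1 := by
  simp [qP]

lemma qBinom_add_self_right (q : ℝ) (m k : ℕ) :
    qBinom q (m + k) k = qP q q (m + k) / (qP q q k * qP q q m) := by
  simp [qBinom]

lemma qBinom_zero_right (q : ℝ) (m : ℕ) : qBinom q m 0 = qP q q m / qP q q m := by
  simpa using qBinom_add_self_right q m 0

section Arrays

variable {n : ℕ}

@[simp]
lemma wt_zero : wt (0 : Fin n → ℕ) = 0 := by
  simp [wt]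

lemma wt_add (α β : Fin n → ℕ) : wt (α + β) = wt α + wt β := by
  simp [wt, Finset.sum_add_distrib]

@[simp]
lemma zc_zero : zc (0 : Fin n → ℕ) = 0 := by
  ext; simp [zc]

lemma zc_add (α β : Fin n → ℕ) : zc (α + β) = zc α + zc β := by
  ext; simp [zc]

@[simp]
lemma phiZ_zero_right (α : Fin n → ℤ) : phiZ α 0 = 0 := by
  simp [phiZ]

end Arrays

section Weights

variable {n : ℕ} (q lam mu : ℝ)

lemma Phi_zero_left (β : Fin n → ℕ) :
    Phi q lam mu 0 β = qP q (mu / lam) (wt β) / qP q mu (wt β) *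
      ((∏ i, qP q q (β i)) / ∏ i, qP q q (β i)) := by
  simp [Phi, qBinom_zero_right, Finset.prod_div_distrib]

lemma Phi_add_left (β γ : Fin n → ℕ) :
    Phi q lam mu γ (β + γ) = q ^ phiZ (zc β) (zc γ) * (mu / lam) ^ wt γ *
      (qP q lam (wt γ) * qP q (mu / lam) (wt β) / qP q mu (wt β + wt γ)) *
      ((∏ i, qP q q (β i + γ i)) / ((∏ i, qP q q (γ i)) * ∏ i, qP q q (β i))) := by
  simp [Phi, wt_add, zc_add, qBinom_add_self_right, Finset.prod_div_distrib,
    Finset.prod_mul_distrib]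

lemma gfun_eq (α : Fin n → ℕ) :
    gfun q mu α = (mu ^ wt α)⁻¹ * qP q mu (wt α) / ∏ i, qP q q (α i) := by
  rw [gfun, zpow_neg, zpow_natCast]

theorem Phi_factorization (hmu : mu ≠ 0) (β γ : Fin n → ℕ) (hβ : qP q mu (wt β) ≠ 0) :
    q ^ (phiZ (zc β) (zc γ)) * (gfun q mu β * gfun q lam γ / gfun q mu (β + γ)) *
      Phi q lam mu 0 β = Phi q lam mu γ (β + γ) := by
  rw [Phi_zero_left, Phi_add_left, gfun_eq, gfun_eq, gfun_eq, wt_add, pow_add, div_pow]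
  simp only [Pi.add_apply]
  field_simp

end Weights

lemma Smat_support_add_iff {n : ℕ} (α β γ δ : Fin n → ℕ) :
    (0 : Fin n → ℕ) + α = δ + β ↔ γ + α = δ + (β + γ) := by
  simp only [funext_iff, Pi.add_apply, Pi.zero_apply]
  exact forall_congr' fun i => by omega

theorem Smat_factorization_general {n : ℕ} (q lam mu : ℝ)
    (hmu : mu ≠ 0) (α β γ δ : Fin n → ℕ)
    (h1 : qP q mu (wt β) ≠ 0) :
    q ^ (phiZ (zc β) (zc γ)) * (gfun q mu β * gfun q lam γ / gfun q mu (β + γ)) *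
      Smat q lam mu 0 α δ β
      = Smat q lam mu γ α δ (β + γ) := by
  simp only [Smat, Smat_support_add_iff α β γ δ]
  split_ifs
  · exact Phi_factorization q lam mu hmu β γ h1
  · rw [mul_zero]

/-- The factorization property (gkn):
`q^{φ(β,γ)} (g_β(μ) g_γ(λ)/g_{β+γ}(μ)) S^{0,α}_{δ,β}(λ,μ) = S^{γ,α}_{δ,β+γ}(λ,μ)`
in the nonzero case `δ + α = 0 + β`. -/
theorem Smat_factorization {n : ℕ} (q lam mu : ℝ) (hq0 : 0 < q) (hq1 : q < 1)
    (hlam : lam ≠ 0) (hmu : mu ≠ 0) (α β γ δ : Fin n → ℕ)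
    (hcons : δ + α = (0 : Fin n → ℕ) + β)
    (h1 : qP q mu (wt β) ≠ 0) (h2 : qP q mu (wt (β + γ)) ≠ 0) :
    q ^ (phiZ (zc β) (zc γ)) * (gfun q mu β * gfun q lam γ / gfun q mu (β + γ)) *
      Smat q lam mu 0 α δ β
      = Smat q lam mu γ α δ (β + γ) :=
  Smat_factorization_general q lam mu hmu α β γ δ h1
end
end

section
/- In the q-boson algebra, the commutator identity [b_-, (η b_+;q)_∞/(ζ b_+;q)_∞] = (ζ-η)·((qη b_+;q)_∞/(ζ b_+;q)_∞)·k holds, where the infinite product ratio is defined by its series expansion. -/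
open scoped BigOperators

noncomputable section

/-- The Fock space `F = ⊕_{m≥0} ℂ|m⟩`, realized as coefficient sequences:
`v : ℕ → ℝ` stands for the vector `∑_m v m · |m⟩`. -/
abbrev Fock : Type := ℕ → ℝ

/-- The creation operator `b₊`, with `b₊|m⟩ = |m+1⟩`. -/
def Bp : Module.End ℝ Fock where
  toFun v := fun i => if i = 0 then 0 else v (i - 1)
  map_add' x y := by funext i; by_cases h : i = 0 <;> simp [h]
  map_smul' c x := by funext i; by_cases h : i = 0 <;> simp [h]

/-- The annihilation operator `b₋`, with `b₋|m⟩ = (1-q^m)|m-1⟩`. -/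
def Bm (q : ℝ) : Module.End ℝ Fock where
  toFun v := fun i => (1 - q ^ (i + 1)) * v (i + 1)
  map_add' x y := by funext i; simp [mul_add]
  map_smul' c x := by funext i; simp; ring

/-- The operator `k`, with `k|m⟩ = q^m|m⟩`. -/
def Kop (q : ℝ) : Module.End ℝ Fock where
  toFun v := fun i => q ^ i * v i
  map_add' x y := by funext i; simp [mul_add]
  map_smul' c x := by funext i; simp; ring

/-- The basis vector `|m⟩`. -/
def fock (m : ℕ) : Fock := fun i => if i = m then 1 else 0

/-- The trace `Tr(X) = ∑_{m≥0} ⟨m|X|m⟩/(q;q)_m`, with pairing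
`⟨m|m'⟩ = δ_{m,m'}(q;q)_m`; equivalently the sum of diagonal coefficients. -/
def Tr (X : Module.End ℝ Fock) : ℝ := ∑' m : ℕ, X (fock m) m

/-- Series coefficient of the ratio of infinite products
`(η b₊;q)_∞/(ζ b₊;q)_∞ = ∑_j ((η/ζ;q)_j/(q;q)_j)(ζ b₊)^j`:
the coefficient of `b₊^j` is `(∏_{t<j}(ζ - η q^t))/(q;q)_j`. -/
def ratioCoeff (q η ζ : ℝ) (j : ℕ) : ℝ :=
  (∏ t ∈ Finset.range j, (ζ - η * q ^ t)) / qP q q j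

/-- The operator `(η b₊;q)_∞/(ζ b₊;q)_∞ = ∑_j ratioCoeff j · b₊^j`,
a well-defined linear operator on the Fock space since `b₊` raises degree. -/
def Ratio (q η ζ : ℝ) : Module.End ℝ Fock where
  toFun v := fun i => ∑ j ∈ Finset.range (i + 1), ratioCoeff q η ζ j * v (i - j)
  map_add' x y := by
    funext i
    simp only [Pi.add_apply, mul_add, Finset.sum_add_distrib]
  map_smul' c x := by
    funext i
    simp only [Pi.smul_apply, smul_eq_mul, RingHom.id_apply, Finset.mul_sum]
    exact Finset.sum_congr rfl fun j _ => by ring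

/-! Write the ratio as a power series `∑_j c_j b₊^j`. Since `[b₋, b₊^j] = (1 - q^j) b₊^(j-1) k`,
the commutator with `b₋` is again such a series times `k`, with coefficients
`(1 - q^(j+1)) c_(j+1)`; for `c_j = ratioCoeff q η ζ j` these equal `(ζ - η) · ratioCoeff q (qη) ζ j`,
because `(q;q)_(j+1) = (q;q)_j (1 - q^(j+1))` and the numerator of `c_(j+1)` splits off its
factor `ζ - η`. -/

open Finset

/-- The operator `∑_j c j • b₊^j`, acting on coefficient sequences by convolution. -/
def bpSeries (c : ℕ → ℝ) : Module.End ℝ Fock where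
  toFun v n := ∑ p ∈ antidiagonal n, c p.1 * v p.2
  map_add' x y := by
    funext n
    simp only [Pi.add_apply, mul_add, sum_add_distrib]
  map_smul' a x := by
    funext n
    simp only [Pi.smul_apply, smul_eq_mul, RingHom.id_apply, mul_sum]
    exact sum_congr rfl fun p _ => by ring

theorem bpSeries_apply (c : ℕ → ℝ) (v : Fock) (n : ℕ) :
    bpSeries c v n = ∑ p ∈ antidiagonal n, c p.1 * v p.2 := rfl

theorem bpSeries_smul (a : ℝ) (c : ℕ → ℝ) : bpSeries (a • c) = a • bpSeries c := by
  ext v n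
  simp only [bpSeries_apply, LinearMap.smul_apply, Pi.smul_apply, smul_eq_mul, mul_sum, mul_assoc]

theorem Ratio_eq_bpSeries (q η ζ : ℝ) : Ratio q η ζ = bpSeries (ratioCoeff q η ζ) := by
  ext v n
  exact (Nat.sum_antidiagonal_eq_sum_range_succ_mk (fun p => ratioCoeff q η ζ p.1 * v p.2) n).symm

theorem Bm_mul_bpSeries_sub_bpSeries_mul_Bm (q : ℝ) (c : ℕ → ℝ) :
    Bm q * bpSeries c - bpSeries c * Bm q
      = bpSeries (fun j => (1 - q ^ (j + 1)) * c (j + 1)) * Kop q := by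
  ext v n
  let f : ℕ × ℕ → ℝ := fun p => (1 - q ^ p.1) * c p.1 * (q ^ p.2 * v p.2)
  have hL : ((Bm q * bpSeries c - bpSeries c * Bm q) v) n = ∑ p ∈ antidiagonal (n + 1), f p := by
    simp only [LinearMap.sub_apply, Module.End.mul_apply, Pi.sub_apply, bpSeries_apply, Bm,
      LinearMap.coe_mk, AddHom.coe_mk, Nat.sum_antidiagonal_succ']
    rw [mul_add, add_sub_assoc, mul_sum, ← sum_sub_distrib]
    congr 1
    · simp only [f]
      ring
    · refine sum_congr rfl fun p hp => ?_
      rw [HasAntidiagonal.mem_antidiagonal] at hp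
      subst hp
      simp only [f]
      ring
  have hR : ((bpSeries (fun j => (1 - q ^ (j + 1)) * c (j + 1)) * Kop q) v) n
      = ∑ p ∈ antidiagonal (n + 1), f p := by
    simp [Nat.sum_antidiagonal_succ, f, bpSeries_apply, Kop]
  rw [hL, hR]

theorem qP_succ (q z : ℝ) (m : ℕ) : qP q z (m + 1) = qP q z m * (1 - z * q ^ m) :=
  prod_range_succ _ m

theorem qP_ne_zero {q z : ℝ} {m : ℕ} (h : ∀ j < m, z * q ^ j ≠ 1) : qP q z m ≠ 0 :=
  prod_ne_zero_iff.mpr fun j hj => sub_ne_zero.mpr (h j (mem_range.mp hj)).symm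

theorem ratioCoeff_succ {q : ℝ} (hq : ∀ n : ℕ, q ^ (n + 1) ≠ 1) (η ζ : ℝ) (j : ℕ) :
    (1 - q ^ (j + 1)) * ratioCoeff q η ζ (j + 1) = (ζ - η) * ratioCoeff q (q * η) ζ j := by
  have hqP : qP q q j ≠ 0 := qP_ne_zero fun t _ => by rw [← pow_succ']; exact hq t
  have hnum : ∏ t ∈ range (j + 1), (ζ - η * q ^ t)
      = (∏ t ∈ range j, (ζ - q * η * q ^ t)) * (ζ - η) := by
    rw [prod_range_succ']
    congr 1
    · exact prod_congr rfl fun t _ => by ring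
    · ring
  have hden : qP q q (j + 1) = qP q q j * (1 - q ^ (j + 1)) := by
    rw [qP_succ, ← pow_succ']
  have hj : (1 : ℝ) - q ^ (j + 1) ≠ 0 := sub_ne_zero.mpr (hq j).symm
  rw [ratioCoeff, ratioCoeff, hnum, hden]
  field_simp

/-- The commutator identity
`[b₋, (η b₊;q)_∞/(ζ b₊;q)_∞] = (ζ-η) (qη b₊;q)_∞/(ζ b₊;q)_∞ · k`. -/
theorem bm_ratio_comm (q η ζ : ℝ) (hq0 : 0 < q) (hq1 : q < 1) :
    Bm q * Ratio q η ζ - Ratio q η ζ * Bm q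
      = (ζ - η) • (Ratio q (q * η) ζ * Kop q) := by
  have hq : ∀ n : ℕ, q ^ (n + 1) ≠ 1 := fun n => (pow_lt_one₀ hq0.le hq1 n.succ_ne_zero).ne
  have hcoeff : (fun j => (1 - q ^ (j + 1)) * ratioCoeff q η ζ (j + 1))
      = (ζ - η) • ratioCoeff q (q * η) ζ :=
    funext (ratioCoeff_succ hq η ζ)
  rw [Ratio_eq_bpSeries, Ratio_eq_bpSeries, Bm_mul_bpSeries_sub_bpSeries_mul_Bm, hcoeff,
    bpSeries_smul, smul_mul_assoc]
end
end
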